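/- arXiv:1308.0675 — 2 statements merged into one kernel-verified Lean document; each statement's English description precedes it below -/
import Mathlib

section
/- If G is a connected oriented graph on vertex set V and W, W' ⊆ V satisfy G_W = G_{W'}, then W' = W or W' = V ∖ W. -/
/-- A digraph on a vertex type `V`: a set of ordered pairs of vertices,
given by its adjacency relation. -/
structure Dgraph (V : Type*) where
  Adj : V → V → Prop

namespace Dgraph

variable {V W : Type*}

/-- Switching at a vertex `v`: every edge incident with `v` is reversed. -/
def switchV (G : Dgraph V) (v : V) : Dgraph V :=
  ⟨fun a b => ((a = v ∨ b = v) ∧ G.Adj b a) ∨ (¬(a = v ∨ b = v) ∧ G.Adj a b)⟩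

/-- Switching about a set `S`: every edge with exactly one endpoint in `S` is reversed. -/
def switchSet (G : Dgraph V) (S : Set V) : Dgraph V :=
  ⟨fun a b => (((a ∈ S) ↔ (b ∈ S)) ∧ G.Adj a b) ∨ (¬((a ∈ S) ↔ (b ∈ S)) ∧ G.Adj b a)⟩

/-- Relabelling of a digraph by a permutation: `(γ a, γ b)` is an edge of `G.relabel γ`
whenever `(a,b)` is an edge of `G`. -/
def relabel (G : Dgraph V) (γ : Equiv.Perm V) : Dgraph V :=
  ⟨fun a b => G.Adj (γ.symm a) (γ.symm b)⟩

/-- Isomorphism of digraphs (possibly on different vertex types). -/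
def DIso (G : Dgraph V) (H : Dgraph W) : Prop :=
  ∃ e : V ≃ W, ∀ a b, G.Adj a b ↔ H.Adj (e a) (e b)

/-- An oriented graph: a digraph with no loops and no pair of opposite edges. -/
def IsOriented (G : Dgraph V) : Prop := ∀ a b, G.Adj a b → ¬ G.Adj b a

/-- The underlying undirected (simple) graph of a digraph. -/
def underlying (G : Dgraph V) : SimpleGraph V where
  Adj a b := a ≠ b ∧ (G.Adj a b ∨ G.Adj b a)
  symm := ⟨fun a b ⟨h1, h2⟩ => ⟨h1.symm, h2.symm⟩⟩
  loopless := ⟨fun a ⟨h1, _⟩ => h1 rfl⟩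

/-- The vertex set of the connected component (of the underlying graph) containing `v`. -/
def compSet (G : Dgraph V) (v : V) : Set V := {x | (underlying G).Reachable v x}

/-- The induced subdigraph on a set of vertices. -/
def induce (G : Dgraph V) (S : Set V) : Dgraph S := ⟨fun a b => G.Adj a b⟩

/-- A digraph is switching-stable if each vertex switching is isomorphic to it. -/
def SwitchStable (G : Dgraph V) : Prop := ∀ v, DIso (G.switchV v) G

/-- Isomorphism as a setoid on digraphs with a fixed vertex type. -/
def isoSetoid (V : Type*) : Setoid (Dgraph V) where
  r := DIso
  iseqv := by
    refine ⟨fun G => ⟨Equiv.refl V, fun a b => Iff.rfl⟩, ?_, ?_⟩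
    · rintro G H ⟨e, h⟩
      exact ⟨e.symm, fun a b => by simpa using (h (e.symm a) (e.symm b)).symm⟩
    · rintro G H K ⟨e, h⟩ ⟨f, h2⟩
      exact ⟨e.trans f, fun a b => (h a b).trans (h2 _ _)⟩

/-- The switching deck: the multiset of isomorphism classes of vertex switchings. -/
def deck (G : Dgraph V) [Fintype V] : Multiset (Quotient (isoSetoid V)) :=
  Finset.univ.val.map fun v => Quotient.mk (isoSetoid V) (G.switchV v)

/-- The `t`-deck: the deck augmented by `t` copies of the isomorphism class of `G`. -/
def tdeck (G : Dgraph V) [Fintype V] (t : ℕ) : Multiset (Quotient (isoSetoid V)) :=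
  Multiset.replicate t (Quotient.mk (isoSetoid V) G) + G.deck

end Dgraph

/-!
On an edge `ab` of an oriented graph exactly one of `(a, b)`, `(b, a)` is present, and it
survives switching about `W` precisely when `a` and `b` lie on the same side of `W`. Hence
`G_W = G_{W'}` forces `a ∈ W ↔ a ∈ W'` to take the same truth value at both ends of every edge,
so by connectedness it is constant: `W' = W` if it is true, `W' = Wᶜ` if it is false.
-/

namespace SimpleGraph

variable {V : Type*} {G : SimpleGraph V} {P : V → Prop}

theorem Reachable.iff_of_forall_adj (hP : ∀ a b, G.Adj a b → (P a ↔ P b)) {u v : V}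
    (huv : G.Reachable u v) : P u ↔ P v := by
  obtain ⟨p⟩ := huv
  induction p with
  | nil => rfl
  | cons hadj _ ih => exact (hP _ _ hadj).trans ih

theorem Connected.forall_or_forall_not_of_forall_adj (hG : G.Connected)
    (hP : ∀ a b, G.Adj a b → (P a ↔ P b)) : (∀ v, P v) ∨ ∀ v, ¬P v := by
  obtain ⟨u⟩ := hG.nonempty
  by_cases hu : P u
  · exact .inl fun v => (Reachable.iff_of_forall_adj hP (hG u v)).1 hu
  · exact .inr fun v hv => hu ((Reachable.iff_of_forall_adj hP (hG u v)).2 hv)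

end SimpleGraph

namespace Dgraph

variable {V : Type*} {G : Dgraph V} {S T : Set V} {a b : V}

theorem IsOriented.switchSet_adj_iff (hG : G.IsOriented) (hab : G.Adj a b) :
    (G.switchSet S).Adj a b ↔ (a ∈ S ↔ b ∈ S) := by
  simp only [switchSet, hab, hG a b hab, and_true, and_false, or_false]

theorem IsOriented.mem_iff_mem_iff_of_adj_of_switchSet_eq (hG : G.IsOriented)
    (hST : G.switchSet S = G.switchSet T) (hab : G.Adj a b) :
    (a ∈ S ↔ a ∈ T) ↔ (b ∈ S ↔ b ∈ T) := by
  have hsame : (a ∈ S ↔ b ∈ S) ↔ (a ∈ T ↔ b ∈ T) := by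
    rw [← hG.switchSet_adj_iff hab, ← hG.switchSet_adj_iff hab, hST]
  tauto

theorem IsOriented.mem_iff_mem_iff_of_switchSet_eq (hG : G.IsOriented)
    (hST : G.switchSet S = G.switchSet T) (hab : G.underlying.Adj a b) :
    (a ∈ S ↔ a ∈ T) ↔ (b ∈ S ↔ b ∈ T) := by
  rcases hab.2 with hab | hba
  · exact hG.mem_iff_mem_iff_of_adj_of_switchSet_eq hST hab
  · exact (hG.mem_iff_mem_iff_of_adj_of_switchSet_eq hST hba).symm

end Dgraph

open Dgraph in
/-- For a connected oriented graph, `G_W = G_{W'}` implies `W' = W` or `W' = V ∖ W`. -/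
theorem switchSet_eq_iff_of_connected {V : Type*} (G : Dgraph V)
    (hor : IsOriented G) (hconn : G.underlying.Connected) (W W' : Set V)
    (h : G.switchSet W = G.switchSet W') :
    W' = W ∨ W' = Wᶜ := by
  rcases hconn.forall_or_forall_not_of_forall_adj
      (fun _ _ hab => hor.mem_iff_mem_iff_of_switchSet_eq h hab) with hagree | hdisagree
  · exact .inl (Set.ext fun v => (hagree v).symm)
  · exact .inr (Set.ext fun v => (not_iff.1 (hdisagree v)).symm)
end

section
/- For any digraph D on vertex set V, the set Γ(D) = { γ ∈ Sym(V) : D_W = D^γ for some W ⊆ V } is a subgroup of the symmetric group on V; moreover it contains the automorphism group of D and is contained in the automorphism group of the underlying undirected graph of D. -/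
/-!
Switching and relabelling both act on digraphs, switchings compose by symmetric difference
`(D_S)_T = D_{S ∆ T}`, and relabelling carries a switching set along: `(D_S)^γ = (D^γ)_{γ S}`.
Hence `γ ∈ Γ(D)` says exactly that `D^γ` lies in the switching class of `D`, and `Γ(D)` is the
stabiliser of that class. Switching never changes the underlying graph, so every `γ ∈ Γ(D)`
is an automorphism of it.
-/

namespace Dgraph

variable {V : Type*}

@[ext]
lemma ext {G H : Dgraph V} (h : ∀ a b, G.Adj a b ↔ H.Adj a b) : G = H := by
  cases G; cases H
  congr
  funext a b
  exact propext (h a b)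

@[simp]
lemma switchSet_empty (G : Dgraph V) : G.switchSet ∅ = G := by
  ext a b
  simp [switchSet]

lemma switchSet_switchSet (G : Dgraph V) (S T : Set V) :
    (G.switchSet S).switchSet T = G.switchSet (symmDiff S T) := by
  ext a b
  by_cases haS : a ∈ S <;> by_cases hbS : b ∈ S <;> by_cases haT : a ∈ T <;>
    by_cases hbT : b ∈ T <;> simp [switchSet, Set.mem_symmDiff, *]

@[simp]
lemma switchSet_switchSet_self (G : Dgraph V) (S : Set V) :
    (G.switchSet S).switchSet S = G := by
  rw [switchSet_switchSet, symmDiff_self, Set.bot_eq_empty, switchSet_empty]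

@[simp]
lemma relabel_one (G : Dgraph V) : G.relabel 1 = G :=
  rfl

lemma relabel_mul (G : Dgraph V) (γ δ : Equiv.Perm V) :
    G.relabel (γ * δ) = (G.relabel δ).relabel γ :=
  rfl

@[simp]
lemma relabel_relabel_inv (G : Dgraph V) (γ : Equiv.Perm V) :
    (G.relabel γ).relabel γ⁻¹ = G := by
  rw [← relabel_mul, inv_mul_cancel, relabel_one]

lemma relabel_switchSet (G : Dgraph V) (S : Set V) (γ : Equiv.Perm V) :
    (G.switchSet S).relabel γ = (G.relabel γ).switchSet (γ.symm ⁻¹' S) :=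
  rfl

@[simp]
lemma underlying_switchSet (G : Dgraph V) (S : Set V) :
    (G.switchSet S).underlying = G.underlying := by
  ext a b
  simp only [underlying, switchSet]
  tauto

lemma underlying_relabel_adj_apply (G : Dgraph V) (γ : Equiv.Perm V) (a b : V) :
    (G.relabel γ).underlying.Adj (γ a) (γ b) ↔ G.underlying.Adj a b := by
  simp [underlying, relabel]

/-- The group `Γ(D)`. -/
def switchAut (G : Dgraph V) : Subgroup (Equiv.Perm V) where
  carrier := {γ | ∃ S : Set V, G.switchSet S = G.relabel γ}
  one_mem' := ⟨∅, by simp⟩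
  mul_mem' := by
    rintro γ δ ⟨S, hS⟩ ⟨T, hT⟩
    refine ⟨symmDiff S (γ.symm ⁻¹' T), ?_⟩
    rw [relabel_mul, ← hT, relabel_switchSet, ← hS, switchSet_switchSet]
  inv_mem' := by
    rintro γ ⟨S, hS⟩
    refine ⟨γ⁻¹.symm ⁻¹' S, ?_⟩
    calc G.switchSet (γ⁻¹.symm ⁻¹' S)
        = ((G.switchSet S).relabel γ⁻¹).switchSet (γ⁻¹.symm ⁻¹' S) := by
          rw [hS, relabel_relabel_inv]
      _ = G.relabel γ⁻¹ := by rw [relabel_switchSet, switchSet_switchSet_self]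

lemma relabel_eq_self_mem_switchAut {G : Dgraph V} {γ : Equiv.Perm V} (h : G.relabel γ = G) :
    γ ∈ G.switchAut :=
  ⟨∅, by rw [switchSet_empty, h]⟩

lemma underlying_adj_apply_of_mem_switchAut {G : Dgraph V} {γ : Equiv.Perm V}
    (h : γ ∈ G.switchAut) (a b : V) :
    G.underlying.Adj a b ↔ G.underlying.Adj (γ a) (γ b) := by
  obtain ⟨S, hS⟩ := h
  rw [← underlying_relabel_adj_apply G γ, ← hS, underlying_switchSet]

end Dgraph

open Dgraph in
/-- The set `Γ(D) = {γ | D_W = D^γ for some W}` is a subgroup of `Sym(V)`, it contains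
the automorphism group of `D`, and is contained in the automorphism group of the
underlying undirected graph of `D`. -/
theorem gamma_is_subgroup {V : Type*} (D : Dgraph V) :
    (∃ Γ : Subgroup (Equiv.Perm V),
        (Γ : Set (Equiv.Perm V)) = {γ | ∃ S : Set V, D.switchSet S = D.relabel γ}) ∧
      {γ : Equiv.Perm V | D.relabel γ = D} ⊆
        {γ | ∃ S : Set V, D.switchSet S = D.relabel γ} ∧
      {γ : Equiv.Perm V | ∃ S : Set V, D.switchSet S = D.relabel γ} ⊆
        {γ | ∀ a b, D.underlying.Adj a b ↔ D.underlying.Adj (γ a) (γ b)} :=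
  ⟨⟨D.switchAut, rfl⟩, fun _ => relabel_eq_self_mem_switchAut,
    fun _ h => underlying_adj_apply_of_mem_switchAut h⟩
end
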